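/- arXiv:1004.2349 — 2 statements merged into one kernel-verified Lean document; each statement's English description precedes it below -/
import Mathlib

section
/- Set z := X_δ and z_m := F_m(z), where F_m is the m-th normalized Chebyshev polynomial of the first kind. Then for all m ≥ 1 and all n ∈ ℤ, X_n · z_m = q^{m/2} X_{n+m} + q^{-m/2} X_{n-m}. -/
/-- The normalized quantum-torus monomial `X^{(a,b)} = q^{-ab/2} X₁^a X₂^b`,
where `v = q^{1/2}`. -/
def Xmon {F : Type*} [DivisionRing F] (v X1 X2 : F) (a b : ℤ) : F :=
  v ^ (-(a * b)) * X1 ^ a * X2 ^ b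

/-- The normalized Chebyshev polynomials of the first kind:
`F 0 = 1`, `F 1 = X`, `F 2 = X^2 - 2`, `F (n+1) = F n * F 1 - F (n-1)` for `n ≥ 2`. -/
noncomputable def chebF : ℕ → Polynomial ℤ
  | 0 => 1
  | 1 => Polynomial.X
  | 2 => Polynomial.X ^ 2 - 2
  | n + 3 => chebF (n + 2) * Polynomial.X - chebF (n + 1)

/-! The exchange relation `X_{n-1} X_{n+1} = q X_n² + 1` propagates the quasi-commutation
`X_n X_{n+1} = q X_{n+1} X_n` from `n = 1` to all `n`. With both relations one computes
`q X_{n+2} Δ_n = q X_{n+3} + X_{n+1} = q X_{n+2} Δ_{n+1}`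
for `Δ_n = X_n X_{n+3} - q X_{n+1} X_{n+2}`, so `Δ_n` does not depend on `n`, and
`q X_n Δ_{n-1} = q X_{n+1} + X_{n-1}` becomes the three-term recurrence
`X_n X_δ = q^{1/2} X_{n+1} + q^{-1/2} X_{n-1}`.
For `m ≥ 1` the polynomials `F_m` are the Vieta–Lucas polynomials `C_m`
(`C_{m+1} = x C_m - C_{m-1}`, `C_0 = 2`, `C_{-m} = C_m`), and the recurrence
turns into the claim by induction on `m`, which in this form holds for every `m ∈ ℤ`. -/

open Polynomial

theorem chebF_eq_C : ∀ m : ℕ, 1 ≤ m → chebF m = Chebyshev.C ℤ m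
  | 1, _ => by simp [chebF]
  | 2, _ => by simp [chebF, Chebyshev.C_two]
  | m + 3, _ => by
    rw [chebF, chebF_eq_C (m + 2) (by omega), chebF_eq_C (m + 1) (by omega), mul_comm,
      show ((m + 3 : ℕ) : ℤ) = (m + 1 : ℕ) + 2 by push_cast; ring, Chebyshev.C_add_two]
    push_cast
    ring_nf

theorem zpow_mul_add_inv {F : Type*} [DivisionRing F] {v : F} (hv : v ≠ 0) (k : ℤ) (a b : F) :
    v ^ k * (v * a + v⁻¹ * b) = v ^ (k + 1) * a + v ^ (k - 1) * b := by
  rw [zpow_add_one₀ hv, zpow_sub_one₀ hv, mul_add, mul_assoc, mul_assoc]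

theorem mul_aeval_chebyshevC {F : Type*} [DivisionRing F] {v Z : F} (hv : v ≠ 0) {X : ℤ → F}
    (hZ : ∀ n, X n * Z = v * X (n + 1) + v⁻¹ * X (n - 1)) (m n : ℤ) :
    X n * aeval Z (Chebyshev.C ℤ m) = v ^ m * X (n + m) + v ^ (-m) * X (n - m) := by
  induction m using Chebyshev.induct' generalizing n with
  | zero => simp [Chebyshev.C_zero, map_ofNat, mul_two]
  | one => simpa using hZ n
  | add_two m ih₁ ih₀ =>
    rw [Chebyshev.C_add_two, mul_comm Polynomial.X, map_sub, map_mul, aeval_X, mul_sub,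
      ← mul_assoc, ih₁, ih₀, add_mul, mul_assoc, mul_assoc, hZ, hZ, zpow_mul_add_inv hv,
      zpow_mul_add_inv hv]
    ring_nf
    abel
  | neg m ih =>
    rw [Chebyshev.C_neg, ih, neg_neg, sub_neg_eq_add, ← sub_eq_add_neg, add_comm]

section Exchange

variable {R : Type*} [Ring R] {q a b c d : R}

theorem mul_comm_right_of_exchange [NoZeroDivisors R] (hq : ∀ x, Commute q x) (ha : a ≠ 0)
    (hab : a * b = q * (b * a)) (hac : a * c = q * b ^ 2 + 1) : b * c = q * (c * b) := by
  have hq' (x : R) : x * q = q * x := (hq x).symm.eq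
  apply mul_left_cancel₀ ha
  -- `simp only [mul_add, add_mul, ← mul_assoc, hq']` brings both sides to a normal form in which
  -- `q` stands in front of every monomial.
  calc a * (b * c) = q * b * (a * c) := by rw [← mul_assoc, hab]; simp only [← mul_assoc]
    _ = q * (a * c) * b := by
      rw [hac]; simp only [mul_add, add_mul, ← mul_assoc, hq', sq, mul_one]
    _ = a * (q * (c * b)) := by simp only [← mul_assoc, hq']

theorem mul_comm_left_of_exchange [NoZeroDivisors R] (hq : ∀ x, Commute q x) (hc : c ≠ 0)
    (hbc : b * c = q * (c * b)) (hac : a * c = q * b ^ 2 + 1) : a * b = q * (b * a) := by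
  have hq' (x : R) : x * q = q * x := (hq x).symm.eq
  apply mul_right_cancel₀ hc
  calc a * b * c = q * (a * c) * b := by rw [mul_assoc, hbc]; simp only [← mul_assoc, hq']
    _ = q * b * (a * c) := by
      rw [hac]; simp only [mul_add, add_mul, ← mul_assoc, hq', sq, mul_one]
    _ = q * (b * a) * c := by simp only [← mul_assoc]

theorem mul_sq_of_mul_comm (hq : ∀ x, Commute q x) (hab : a * b = q * (b * a)) :
    a * b ^ 2 = q * (q * (b ^ 2 * a)) := by
  have hq' (x : R) : x * q = q * x := (hq x).symm.eq
  calc a * b ^ 2 = q * (b * a) * b := by rw [sq, ← mul_assoc, hab]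
    _ = q * b * (a * b) := by simp only [← mul_assoc]
    _ = q * (q * (b ^ 2 * a)) := by rw [hab]; simp only [← mul_assoc, hq', sq]

theorem exchange_swap [NoZeroDivisors R] (hq : ∀ x, Commute q x) (ha : a ≠ 0)
    (hab : a * b = q * (b * a)) (hac : a * c = q * b ^ 2 + 1) : q * (c * a) = b ^ 2 + q := by
  have hq' (x : R) : x * q = q * x := (hq x).symm.eq
  apply mul_left_cancel₀ ha
  calc a * (q * (c * a)) = q * (a * c) * a := by simp only [← mul_assoc, hq']
    _ = q * (q * (b ^ 2 * a)) + q * a := by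
      rw [hac]; simp only [mul_add, add_mul, ← mul_assoc, hq', mul_one]
    _ = a * (b ^ 2 + q) := by rw [← mul_sq_of_mul_comm hq hab, mul_add, hq']

theorem mul_delta_left_of_exchange (hq : ∀ x, Commute q x) (hab : a * b = q * (b * a))
    (hac : a * c = q * b ^ 2 + 1) (hbd : b * d = q * c ^ 2 + 1) :
    q * (b * (a * d - q * (b * c))) = q * c + a := by
  have hq' (x : R) : x * q = q * x := (hq x).symm.eq
  calc q * (b * (a * d - q * (b * c))) = a * b * d - q * q * (b * b * c) := by
        rw [hab]; simp only [mul_sub, ← mul_assoc, hq']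
    _ = q * (a * c) * c + a - q * q * (b * b * c) := by
        rw [mul_assoc a, hbd]; simp only [mul_add, ← mul_assoc, hq', sq, mul_one]
    _ = q * c + a := by
        rw [hac]; simp only [mul_add, add_mul, ← mul_assoc, hq', sq, mul_one]; abel

theorem mul_delta_right_of_exchange [NoZeroDivisors R] (hq : ∀ x, Commute q x) (ha : a ≠ 0)
    (hab : a * b = q * (b * a)) (hbc : b * c = q * (c * b))
    (hac : a * c = q * b ^ 2 + 1) (hbd : b * d = q * c ^ 2 + 1) :
    q * (c * (a * d - q * (b * c))) = q * d + b := by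
  have hq' (x : R) : x * q = q * x := (hq x).symm.eq
  calc q * (c * (a * d - q * (b * c))) = q * (c * a) * d - q * (q * (c * b)) * c := by
        simp only [mul_sub, ← mul_assoc, hq']
    _ = b * (b * d) + q * d - q * (b * c) * c := by
        rw [exchange_swap hq ha hab hac, ← hbc]; simp only [add_mul, sq, ← mul_assoc]
    _ = q * d + b := by rw [hbd]; simp only [mul_add, ← mul_assoc, hq', sq, mul_one]; abel

end Exchange

structure IsQuantumKroneckerSeq {R : Type*} [Ring R] (q : R) (X : ℤ → R) : Prop where
  central : ∀ x, Commute q x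
  ne_zero : ∀ n, X n ≠ 0
  mul_succ : ∀ n, X n * X (n + 1) = q * (X (n + 1) * X n)
  exchange : ∀ n, X n * X (n + 2) = q * X (n + 1) ^ 2 + 1

def qDelta {R : Type*} [Ring R] (q : R) (X : ℤ → R) (n : ℤ) : R :=
  X n * X (n + 3) - q * (X (n + 1) * X (n + 2))

namespace IsQuantumKroneckerSeq

variable {R : Type*} [Ring R] {q : R} {X : ℤ → R}

theorem of_mul_one_two [NoZeroDivisors R] (hq : ∀ x, Commute q x) (hX : ∀ n, X n ≠ 0)
    (h12 : X 1 * X 2 = q * (X 2 * X 1))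
    (hrec : ∀ n, X (n - 1) * X (n + 1) = q * X n ^ 2 + 1) : IsQuantumKroneckerSeq q X := by
  have exchange (n : ℤ) : X n * X (n + 2) = q * X (n + 1) ^ 2 + 1 := by
    simpa [add_assoc, one_add_one_eq_two] using hrec (n + 1)
  refine ⟨hq, hX, fun n => Int.inductionOn' n 1 h12 (fun k _ hk => ?_) (fun k _ hk => ?_),
    exchange⟩
  · rw [add_assoc, one_add_one_eq_two]
    exact mul_comm_right_of_exchange hq (hX k) hk (exchange k)
  · rw [sub_add_cancel]
    exact mul_comm_left_of_exchange hq (hX (k + 1)) hk (hrec k)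

theorem q_ne_zero [NoZeroDivisors R] (hX : IsQuantumKroneckerSeq q X) : q ≠ 0 := by
  rintro rfl
  simpa [hX.ne_zero] using hX.mul_succ 0

theorem mul_succ_of_eq (hX : IsQuantumKroneckerSeq q X) {m n : ℤ} (h : n = m + 1) :
    X m * X n = q * (X n * X m) :=
  h ▸ hX.mul_succ m

theorem exchange_of_eq (hX : IsQuantumKroneckerSeq q X) {k m n : ℤ} (hm : m = k + 1)
    (hn : n = k + 2) : X k * X n = q * X m ^ 2 + 1 :=
  hm ▸ hn ▸ hX.exchange k

theorem mul_qDelta_left (hX : IsQuantumKroneckerSeq q X) (n : ℤ) :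
    q * (X (n + 1) * qDelta q X n) = q * X (n + 2) + X n :=
  mul_delta_left_of_exchange hX.central (hX.mul_succ n) (hX.exchange n)
    (hX.exchange_of_eq (by ring) (by ring))

theorem mul_qDelta_right [NoZeroDivisors R] (hX : IsQuantumKroneckerSeq q X) (n : ℤ) :
    q * (X (n + 2) * qDelta q X n) = q * X (n + 3) + X (n + 1) :=
  mul_delta_right_of_exchange hX.central (hX.ne_zero n) (hX.mul_succ n)
    (hX.mul_succ_of_eq (by ring)) (hX.exchange n) (hX.exchange_of_eq (by ring) (by ring))

theorem periodic_qDelta [NoZeroDivisors R] (hX : IsQuantumKroneckerSeq q X) :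
    Function.Periodic (qDelta q X) 1 := by
  intro n
  apply mul_left_cancel₀ (mul_ne_zero hX.q_ne_zero (hX.ne_zero (n + 2)))
  calc q * X (n + 2) * qDelta q X (n + 1) = q * X (n + 3) + X (n + 1) := by
        simpa [mul_assoc, add_assoc] using hX.mul_qDelta_left (n + 1)
    _ = q * X (n + 2) * qDelta q X n := by rw [mul_assoc, hX.mul_qDelta_right]

theorem qDelta_eq_qDelta_zero [NoZeroDivisors R] (hX : IsQuantumKroneckerSeq q X) (n : ℤ) :
    qDelta q X n = qDelta q X 0 := by
  simpa using hX.periodic_qDelta.int_mul_eq n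

theorem mul_qDelta_zero {F : Type*} [DivisionRing F] {v : F} (hv : v ≠ 0)
    (hvc : ∀ x, Commute v x) {X : ℤ → F} (hX : IsQuantumKroneckerSeq (v ^ 2) X) (n : ℤ) :
    X n * (v * qDelta (v ^ 2) X 0) = v * X (n + 1) + v⁻¹ * X (n - 1) := by
  have h := hX.mul_qDelta_left (n - 1)
  rw [sub_add_cancel, hX.qDelta_eq_qDelta_zero, show n - 1 + 2 = n + 1 by ring] at h
  calc X n * (v * qDelta (v ^ 2) X 0) = v⁻¹ * (v ^ 2 * (X n * qDelta (v ^ 2) X 0)) := by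
        rw [sq, mul_assoc, inv_mul_cancel_left₀ hv, (hvc _).left_comm]
    _ = v * X (n + 1) + v⁻¹ * X (n - 1) := by
        rw [h, mul_add, sq, mul_assoc, inv_mul_cancel_left₀ hv]

end IsQuantumKroneckerSeq

/-- With `z_m := F_m(X_δ)`, `X_δ = q^{1/2}(X₀X₃ - qX₁X₂)`, for all `m ≥ 1` and `n ∈ ℤ`:
`X_n z_m = q^{m/2} X_{n+m} + q^{-m/2} X_{n-m}`. -/
theorem Xn_mul_zm
{F : Type*} [DivisionRing F] (v : F) (hv : v ≠ 0)
    (hvc : ∀ x : F, v * x = x * v)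
    (X : ℤ → F) (hXne : ∀ m : ℤ, X m ≠ 0)
    (h12 : X 1 * X 2 = v ^ 2 * (X 2 * X 1))
    (hrec : ∀ m : ℤ, X (m - 1) * X (m + 1) = v ^ 2 * X m ^ 2 + 1) :
    ∀ (m : ℕ), 1 ≤ m → ∀ n : ℤ,
      X n * Polynomial.aeval (v * (X 0 * X 3 - v ^ 2 * (X 1 * X 2))) (chebF m)
        = v ^ (m : ℤ) * X (n + m) + v ^ (-(m : ℤ)) * X (n - m) := by
  have hX : IsQuantumKroneckerSeq (v ^ 2) X :=
    .of_mul_one_two (fun x => Commute.pow_left (hvc x) 2) hXne h12 hrec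
  have hδ : X 0 * X 3 - v ^ 2 * (X 1 * X 2) = qDelta (v ^ 2) X 0 := by norm_num [qDelta]
  intro m hm n
  rw [chebF_eq_C m hm, hδ]
  exact mul_aeval_chebyshevC hv (hX.mul_qDelta_zero hv hvc) m n
end

section
/- Every Laurent monomial coefficient appearing in the expansion of any cluster variable X_m (m ∈ ℤ) in terms of X_1, X_2 in the quantum torus lies in ℕ[q^{±1/2}]: i.e., writing X_m = Σ_{(a,b)} c_{a,b}(q^{1/2}) X^{(a,b)}, each c_{a,b} is a Laurent polynomial in q^{1/2} with nonnegative integer coefficients. -/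
section Exchange

variable {F : Type*} [DivisionRing F] {q : F}

theorem mul_inv_eq_of_mul_eq (hq : ∀ z : F, Commute q z) {a b : F} (ha : a ≠ 0)
    (hab : a * b = q * (b * a)) : b * a⁻¹ = q * (a⁻¹ * b) := by
  rw [mul_inv_eq_iff_eq_mul₀ ha]
  calc b = a⁻¹ * (q * (b * a)) := by rw [← hab, inv_mul_cancel_left₀ ha]
    _ = q * (a⁻¹ * b) * a := by rw [← mul_assoc a⁻¹ q, ← (hq a⁻¹).eq]; simp only [mul_assoc]

theorem inv_mul_inv_eq_of_mul_eq (hq : ∀ z : F, Commute q z) {a b : F}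
    (hab : a * b = q * (b * a)) : b⁻¹ * a⁻¹ = q⁻¹ * (a⁻¹ * b⁻¹) := by
  rw [← mul_inv_rev, hab, mul_inv_rev, mul_inv_rev, (hq _).inv_left₀.eq]

theorem mul_eq_mul_of_exchange (hq : ∀ z : F, Commute q z) {a b c : F} (ha : a ≠ 0)
    (hab : a * b = q * (b * a)) (hac : a * c = q * b ^ 2 + 1) : b * c = q * (c * b) := by
  have hc : c = a⁻¹ * (q * b ^ 2 + 1) := (eq_inv_mul_iff_mul_eq₀ ha).mpr hac
  have hP : Commute b (q * b ^ 2 + 1) :=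
    ((hq b).symm.mul_right (Commute.self_pow b 2)).add_right (Commute.one_right b)
  rw [hc, ← mul_assoc, mul_inv_eq_of_mul_eq hq ha hab, mul_assoc, mul_assoc, hP.eq, mul_assoc]

def exchangeInvariant (q b c : F) : F := b * c⁻¹ + b⁻¹ * c + q⁻¹ * (b⁻¹ * c⁻¹)

theorem exchangeInvariant_eq_of_mul_eq_succ (hq : ∀ z : F, Commute q z) (hq0 : q ≠ 0)
    {b c d : F} (hb : b ≠ 0) (hc : c ≠ 0) (hbd : b * d = q * c ^ 2 + 1) :
    exchangeInvariant q b c = (b + q⁻¹ * d) * c⁻¹ := by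
  obtain rfl : d = b⁻¹ * (q * c ^ 2 + 1) := (eq_inv_mul_iff_mul_eq₀ hb).mpr hbd
  rw [(hq b⁻¹).inv_left₀.left_comm, mul_add q⁻¹, inv_mul_cancel_left₀ hq0, mul_one,
    exchangeInvariant]
  simp only [mul_add, add_mul, pow_two, mul_assoc, mul_inv_cancel_right₀ hc]
  rw [(hq b⁻¹).inv_left₀.left_comm, add_assoc]

theorem exchangeInvariant_eq_of_mul_eq_pred (hq : ∀ z : F, Commute q z) (hq0 : q ≠ 0)
    {a b c : F} (hb : b ≠ 0) (hc : c ≠ 0) (hac : a * c = q * b ^ 2 + 1)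
    (hbc : b * c = q * (c * b)) :
    exchangeInvariant q b c = (a + q⁻¹ * c) * b⁻¹ := by
  obtain rfl : a = (q * b ^ 2 + 1) * c⁻¹ := (eq_mul_inv_iff_mul_eq₀ hc).mpr hac
  simp only [add_mul, one_mul, mul_assoc, inv_mul_inv_eq_of_mul_eq hq hbc,
    mul_inv_eq_of_mul_eq hq hb hbc, inv_mul_cancel_left₀ hq0, pow_two]
  rw [(hq b).inv_left₀.symm.left_comm, (hq b).inv_left₀.symm.left_comm, mul_inv_cancel_left₀ hq0,
    mul_inv_cancel_left₀ hb, exchangeInvariant]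
  abel

end Exchange

section Sequence

variable {F : Type*} [DivisionRing F] {q : F} {X : ℤ → F}

theorem mul_succ_comm_of_exchange (hq : ∀ z : F, Commute q z) (hX : ∀ m, X m ≠ 0)
    (h12 : X 1 * X 2 = q * (X 2 * X 1))
    (hrec : ∀ m, X (m - 1) * X (m + 1) = q * X m ^ 2 + 1) {n : ℤ} (hn : 1 ≤ n) :
    X n * X (n + 1) = q * (X (n + 1) * X n) := by
  induction n, hn using Int.leInduction with
  | base => exact h12
  | succ n _ ih => exact mul_eq_mul_of_exchange hq (hX n) ih (by simpa using hrec (n + 1))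

theorem exchange_linear_recurrence (hq : ∀ z : F, Commute q z) (hq0 : q ≠ 0)
    (hX : ∀ m, X m ≠ 0) (h12 : X 1 * X 2 = q * (X 2 * X 1))
    (hrec : ∀ m, X (m - 1) * X (m + 1) = q * X m ^ 2 + 1) {n : ℤ} (hn : 1 ≤ n) :
    X (n - 1) + q⁻¹ * X (n + 1) = exchangeInvariant q (X 1) (X 2) * X n := by
  suffices (X (n - 1) + q⁻¹ * X (n + 1)) * (X n)⁻¹ = exchangeInvariant q (X 1) (X 2) by
    rw [← this, inv_mul_cancel_right₀ (hX n)]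
  induction n, hn using Int.leInduction with
  | base => exact (exchangeInvariant_eq_of_mul_eq_pred hq hq0 (hX 1) (hX 2) (hrec 1) h12).symm
  | succ n hn ih =>
    rw [add_sub_cancel_right, ← exchangeInvariant_eq_of_mul_eq_succ hq hq0 (hX n) (hX (n + 1))
      (by simpa using hrec (n + 1)), exchangeInvariant_eq_of_mul_eq_pred hq hq0 (hX n)
      (hX (n + 1)) (hrec n) (mul_succ_comm_of_exchange hq hX h12 hrec hn), ih]

def positiveCone (q x y : F) : Subsemiring F := Subsemiring.closure {q, q⁻¹, x, x⁻¹, y, y⁻¹}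

theorem positiveCone_step (hq : ∀ z : F, Commute q z) (hq0 : q ≠ 0) {x y a b c : F}
    (hx : x ≠ 0) (hy : y ≠ 0) (hxy : x * y = q * (y * x))
    (hrec : a + q⁻¹ * c = exchangeInvariant q x y * b)
    (hb : b ∈ positiveCone q x y) (hD : x * y⁻¹ * b - a ∈ positiveCone q x y) :
    c ∈ positiveCone q x y ∧ x * y⁻¹ * c - b ∈ positiveCone q x y := by
  have hc_eq : c = q * (x * y⁻¹ * b - a) + (q * (x⁻¹ * y) + x⁻¹ * y⁻¹) * b := by
    rw [← mul_inv_cancel_left₀ hq0 c, ← add_sub_cancel_left a (q⁻¹ * c), hrec, exchangeInvariant]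
    simp only [add_mul, mul_sub, mul_add, ← mul_assoc, mul_inv_cancel₀ hq0, one_mul]
    abel
  have hconj : ∀ w, x * (y⁻¹ * (x⁻¹ * w)) = q⁻¹ * (y⁻¹ * w) := fun w => by
    rw [← mul_assoc y⁻¹, inv_mul_inv_eq_of_mul_eq hq hxy, mul_assoc, mul_assoc,
      (hq x).inv_left₀.symm.left_comm, mul_inv_cancel_left₀ hx]
  have hD_eq : x * y⁻¹ * c - b = q * (x * y⁻¹) * (x * y⁻¹ * b - a) + q⁻¹ * (y⁻¹ * y⁻¹) * b := by
    simp only [hc_eq, mul_add, add_mul, mul_assoc, (hq x).symm.left_comm, (hq y⁻¹).symm.left_comm,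
      hconj, mul_inv_cancel_left₀ hq0, inv_mul_cancel_left₀ hy]
    abel
  have gen : ∀ g ∈ ({q, q⁻¹, x, x⁻¹, y, y⁻¹} : Set F), g ∈ positiveCone q x y :=
    fun g hg => Subsemiring.subset_closure hg
  simp only [Set.mem_insert_iff, Set.mem_singleton_iff, forall_eq_or_imp, forall_eq] at gen
  obtain ⟨mq, mqi, mx, mxi, my, myi⟩ := gen
  constructor
  · rw [hc_eq]
    exact add_mem (mul_mem mq hD) (mul_mem (add_mem (mul_mem mq (mul_mem mxi my))
      (mul_mem mxi myi)) hb)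
  · rw [hD_eq]
    exact add_mem (mul_mem (mul_mem mq (mul_mem mx myi)) hD) (mul_mem (mul_mem mqi
      (mul_mem myi myi)) hb)

theorem mem_positiveCone_of_one_le (hq : ∀ z : F, Commute q z) (hq0 : q ≠ 0)
    (hX : ∀ m, X m ≠ 0) (h12 : X 1 * X 2 = q * (X 2 * X 1))
    (hrec : ∀ m, X (m - 1) * X (m + 1) = q * X m ^ 2 + 1) {m : ℤ} (hm : 1 ≤ m) :
    X m ∈ positiveCone q (X 1) (X 2) := by
  have pair : ∀ n, 2 ≤ n → X n ∈ positiveCone q (X 1) (X 2) ∧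
      X 1 * (X 2)⁻¹ * X n - X (n - 1) ∈ positiveCone q (X 1) (X 2) := by
    intro n hn
    induction n, hn using Int.leInduction with
    | base =>
      refine ⟨Subsemiring.subset_closure (by simp), ?_⟩
      rw [inv_mul_cancel_right₀ (hX 2), show (2 : ℤ) - 1 = 1 by norm_num, sub_self]
      exact zero_mem _
    | succ n hn ih =>
      rw [add_sub_cancel_right]
      exact positiveCone_step hq hq0 (hX 1) (hX 2) h12
        (exchange_linear_recurrence hq hq0 hX h12 hrec (by omega)) ih.1 ih.2
  obtain rfl | hm := hm.eq_or_lt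
  · exact Subsemiring.subset_closure (by simp)
  · exact (pair m hm).1

theorem positiveCone_op (q x y : F) :
    positiveCone (MulOpposite.op q) (MulOpposite.op y) (MulOpposite.op x) =
      (positiveCone q x y).op := by
  rw [positiveCone, positiveCone, Subsemiring.op_closure]
  congr 1
  ext z
  induction z using MulOpposite.rec'
  simp only [Set.mem_insert_iff, Set.mem_singleton_iff, Set.mem_preimage, ← MulOpposite.op_inv,
    MulOpposite.op_inj, MulOpposite.unop_op]
  tauto

open MulOpposite in
theorem mem_positiveCone (hq : ∀ z : F, Commute q z) (hq0 : q ≠ 0)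
    (hX : ∀ m, X m ≠ 0) (h12 : X 1 * X 2 = q * (X 2 * X 1))
    (hrec : ∀ m, X (m - 1) * X (m + 1) = q * X m ^ 2 + 1) (m : ℤ) :
    X m ∈ positiveCone q (X 1) (X 2) := by
  obtain hm | hm := le_or_gt 1 m
  · exact mem_positiveCone_of_one_le hq hq0 hX h12 hrec hm
  have hq' : ∀ z : Fᵐᵒᵖ, Commute (op q) z := fun z => (hq z.unop).op
  have h12' : op (X 2) * op (X 1) = op q * (op (X 1) * op (X 2)) := by
    rw [← op_mul, h12, op_mul, op_mul, (hq' _).eq]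
  have hrec' : ∀ k : ℤ, op (X (3 - (k - 1))) * op (X (3 - (k + 1))) =
      op q * op (X (3 - k)) ^ 2 + 1 := fun k => by
    rw [← op_mul, show 3 - (k + 1) = 3 - k - 1 by ring, show 3 - (k - 1) = 3 - k + 1 by ring,
      hrec, op_add, op_mul, op_one, op_pow, (hq' _).eq]
  have hmem := mem_positiveCone_of_one_le (X := fun k => op (X (3 - k))) hq'
    ((op_ne_zero_iff q).mpr hq0) (fun k => (op_ne_zero_iff _).mpr (hX _)) (by simpa using h12')
    hrec' (show 1 ≤ 3 - m by omega)
  simpa [positiveCone_op] using hmem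

end Sequence

section Monomials

variable {F : Type*} [DivisionRing F] {q v x y : F}

theorem mul_zpow_eq_of_mul_eq (hq : ∀ z : F, Commute q z) (hxy : x * y = q * (y * x)) (n : ℤ) :
    x * y ^ n = q ^ n * (y ^ n * x) := by
  have h : SemiconjBy x y (q * y) := by rw [SemiconjBy, hxy, mul_assoc]
  rw [← mul_assoc, ← (hq y).mul_zpow]
  exact h.zpow_right₀ n

theorem zpow_mul_eq_of_mul_eq (hq : ∀ z : F, Commute q z) (hxy : x * y = q * (y * x)) (n : ℤ) :
    x ^ n * y = q ^ n * (y * x ^ n) := by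
  have h : SemiconjBy y (q * x) x := by
    rw [SemiconjBy, (hq y).symm.left_comm, ← hxy]
  rw [← h.zpow_right₀ n, (hq x).mul_zpow, ((hq y).zpow_left₀ n).symm.left_comm]

theorem zpow_mul_zpow_eq_of_mul_eq (hq : ∀ z : F, Commute q z) (hxy : x * y = q * (y * x))
    (a b : ℤ) : x ^ a * y ^ b = q ^ (a * b) * (y ^ b * x ^ a) := by
  rw [zpow_mul]
  exact mul_zpow_eq_of_mul_eq (fun z => (hq z).zpow_left₀ a) (zpow_mul_eq_of_mul_eq hq hxy a) b

theorem Xmon_mul_Xmon (hv : ∀ z : F, Commute v z) (hv0 : v ≠ 0) (hx : x ≠ 0) (hy : y ≠ 0)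
    (hxy : x * y = v ^ 2 * (y * x)) (a b c d : ℤ) :
    Xmon v x y a b * Xmon v x y c d = v ^ (a * d - b * c) * Xmon v x y (a + c) (b + d) := by
  have hyx : y * x = v ^ (-2 : ℤ) * (x * y) := by
    rw [hxy, ← mul_assoc, ← zpow_natCast, ← zpow_add₀ hv0]; simp
  have hpull : ∀ (k : ℤ) (z w : F), z * (v ^ k * w) = v ^ k * (z * w) :=
    fun k z w => ((hv z).zpow_left₀ k).symm.left_comm w
  calc Xmon v x y a b * Xmon v x y c d
      = v ^ (-(a * b)) * (v ^ (-(c * d)) * (x ^ a * ((y ^ b * x ^ c) * y ^ d))) := by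
        simp only [Xmon, mul_assoc]; rw [hpull _ (y ^ b), hpull _ (x ^ a)]
    _ = v ^ (-(a * b)) * (v ^ (-(c * d)) * (v ^ (-2 * (b * c)) *
          (x ^ a * (x ^ c * y ^ b * y ^ d)))) := by
        rw [zpow_mul_zpow_eq_of_mul_eq (fun z => (hv z).zpow_left₀ _) hyx, ← zpow_mul,
          mul_assoc (v ^ _) (x ^ c * y ^ b), hpull _ (x ^ a)]
    _ = v ^ (-(a * b) + (-(c * d) + -2 * (b * c))) * (x ^ (a + c) * y ^ (b + d)) := by
        rw [← mul_assoc (v ^ (-(c * d))), ← zpow_add₀ hv0, ← mul_assoc, ← zpow_add₀ hv0,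
          mul_assoc (x ^ c), ← mul_assoc (x ^ a), ← zpow_add₀ hx, ← zpow_add₀ hy]
    _ = v ^ (a * d - b * c) * Xmon v x y (a + c) (b + d) := by
        rw [Xmon, mul_assoc _ (x ^ (a + c)), ← mul_assoc (v ^ (a * d - b * c)), ← zpow_add₀ hv0]
        ring_nf

theorem exists_sum_of_mem_positiveCone (hv : ∀ z : F, Commute v z) (hv0 : v ≠ 0) (hx : x ≠ 0)
    (hy : y ≠ 0) (hxy : x * y = v ^ 2 * (y * x)) {z : F} (hz : z ∈ positiveCone (v ^ 2) x y) :
    ∃ (s : Finset (ℤ × ℤ × ℤ)) (c : ℤ × ℤ × ℤ → ℕ),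
      z = ∑ t ∈ s, (c t : F) * v ^ t.2.2 * Xmon v x y t.1 t.2.1 := by
  let monomials : Submonoid F :=
    { carrier := Set.range fun t : ℤ × ℤ × ℤ => v ^ t.2.2 * Xmon v x y t.1 t.2.1
      mul_mem' := by
        rintro _ _ ⟨⟨a, b, e⟩, rfl⟩ ⟨⟨c, d, f⟩, rfl⟩
        refine ⟨(a + c, b + d, e + f + (a * d - b * c)), ?_⟩
        dsimp only
        rw [mul_assoc, ((hv _).zpow_left₀ f).symm.left_comm, Xmon_mul_Xmon hv hv0 hx hy hxy,
          ← mul_assoc, ← mul_assoc, ← zpow_add₀ hv0, ← zpow_add₀ hv0]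
      one_mem' := ⟨0, by simp [Xmon]⟩ }
  have hle : positiveCone (v ^ 2) x y ≤ monomials.subsemiringClosure := by
    rw [Submonoid.subsemiringClosure_eq_closure, positiveCone]
    apply Subsemiring.closure_mono
    rintro _ (rfl | rfl | rfl | rfl | rfl | rfl)
    exacts [⟨(0, 0, 2), by simp [Xmon]⟩, ⟨(0, 0, -2), by simp [Xmon]⟩, ⟨(1, 0, 0), by simp [Xmon]⟩,
      ⟨(-1, 0, 0), by simp [Xmon]⟩, ⟨(0, 1, 0), by simp [Xmon]⟩, ⟨(0, -1, 0), by simp [Xmon]⟩]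
  obtain ⟨a, rfl⟩ := AddSubmonoid.mem_closure_range_iff.mp (hle hz)
  exact ⟨a.support, a, by simp [Finsupp.sum, nsmul_eq_mul, mul_assoc]⟩

end Monomials

/-- Positivity of cluster variables: every cluster variable `X_m` is an
`ℕ[q^{±1/2}]`-linear combination of the normalized monomials `X^{(a,b)}`; i.e. `X_m` is
a finite sum of terms `c · v^e · X^{(a,b)}` with `c ∈ ℕ`, `e ∈ ℤ`. -/
theorem cluster_variables_positive
{F : Type*} [DivisionRing F] (v : F) (hv : v ≠ 0)
    (hvc : ∀ x : F, v * x = x * v)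
    (X : ℤ → F) (hXne : ∀ m : ℤ, X m ≠ 0)
    (h12 : X 1 * X 2 = v ^ 2 * (X 2 * X 1))
    (hrec : ∀ m : ℤ, X (m - 1) * X (m + 1) = v ^ 2 * X m ^ 2 + 1) :
    ∀ m : ℤ, ∃ (s : Finset (ℤ × ℤ × ℤ)) (c : ℤ × ℤ × ℤ → ℕ),
      X m = ∑ t ∈ s, (c t : F) * v ^ t.2.2 * Xmon v (X 1) (X 2) t.1 t.2.1 := fun m =>
  exists_sum_of_mem_positiveCone hvc hv (hXne 1) (hXne 2) h12
    (mem_positiveCone (fun z => Commute.pow_left (hvc z) 2) (pow_ne_zero 2 hv) hXne h12 hrec m)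
end
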